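/- arXiv:2310.08813 — 3 statements merged into one kernel-verified Lean document; each statement's English description precedes it below -/
import Mathlib

section
/- Let p ∈ (0,1] and θ ∈ (−π, π/2], or p ∈ (1,2] and θ ∈ (−π, 0], with (p,θ) ≠ (2,0). Then for every x ≥ θ, equality cos x = cos θ − A_{p,θ}·(x − θ)^p holds if and only if x = θ or x = φ_p(θ). -/
/-!
Write `f x = (cos θ - cos x) / (x - θ) ^ p`, so that `A p θ = sup f` over `(θ, π)` and
`f' = g / (x - θ) ^ (p + 1)` with `g x = p (cos x - cos θ) + (x - θ) sin x`. At a zero `w` of `g`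
in `(|θ|, π)` one has `sin w · g' w = sin² w - p (1 - cos θ cos w) < 0`, an elementary
trigonometric inequality once `(w - θ) sin w = p (cos θ - cos w)` is substituted (for `θ > 0` it
needs `w > π / 2`, which holds because `g > 0` on `(θ, π / 2]` when `p ≤ 1`). So `g` can only
cross zero downwards there: it is positive on `(|θ|, φ)` and negative on `(φ, π)`, and `f` has a
strict maximum at `φ` over `(θ, π]`. Since `f ≤ 0` on `(θ, |θ|]` and `f x ≤ f π` for `x ≥ π`,
`φ` is the only point of `(θ, ∞)` with `f = A`, which is the equation rewritten.
-/

/-- The set of values `(cos θ - cos x)/(x - θ)^p` for `x ∈ (θ, π)`. -/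
noncomputable def Aset (p θ : ℝ) : Set ℝ :=
  (fun x : ℝ => (Real.cos θ - Real.cos x) / (x - θ) ^ p) '' Set.Ioo θ Real.pi

/-- `A p θ` is the supremum of `(cos θ - cos x)/(x - θ)^p` over `x ∈ (θ, π)`. -/
noncomputable def A (p θ : ℝ) : ℝ := sSup (Aset p θ)

/-- The parameter domain: `p ∈ (0,1]` and `θ ∈ (−π, π/2]`, or `p ∈ (1,2]` and `θ ∈ (−π, 0]`. -/
def Dom (p θ : ℝ) : Prop :=
  (p ∈ Set.Ioc (0 : ℝ) 1 ∧ θ ∈ Set.Ioc (-Real.pi) (Real.pi / 2)) ∨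
  (p ∈ Set.Ioc (1 : ℝ) 2 ∧ θ ∈ Set.Ioc (-Real.pi) 0)

open Real Set Filter Topology

noncomputable def cosRatio (p θ x : ℝ) : ℝ := (cos θ - cos x) / (x - θ) ^ p

noncomputable def cosRatioNum (p θ x : ℝ) : ℝ := p * (cos x - cos θ) + (x - θ) * sin x

theorem hasDerivAt_cosRatioNum (p θ x : ℝ) :
    HasDerivAt (cosRatioNum p θ) ((1 - p) * sin x + (x - θ) * cos x) x := by
  have := (((hasDerivAt_cos x).sub_const (cos θ)).const_mul p).add
    (((hasDerivAt_id x).sub_const θ).mul (hasDerivAt_sin x))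
  exact this.congr_deriv (by simp only [id]; ring)

theorem hasDerivAt_cosRatio {p θ x : ℝ} (hx : θ < x) :
    HasDerivAt (cosRatio p θ) (cosRatioNum p θ x / (x - θ) ^ (p + 1)) x := by
  have ht : 0 < x - θ := sub_pos.2 hx
  have hnum : HasDerivAt (fun y => cos θ - cos y) (sin x) x := by
    simpa using (hasDerivAt_cos x).const_sub (cos θ)
  have hden : HasDerivAt (fun y => (y - θ) ^ p) (1 * p * (x - θ) ^ (p - 1)) x :=
    ((hasDerivAt_id x).sub_const θ).rpow_const (Or.inl ht.ne')
  refine (hnum.div hden (rpow_pos_of_pos ht p).ne').congr_deriv ?_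
  rw [rpow_sub ht, rpow_add ht, rpow_one]
  unfold cosRatioNum
  field_simp
  ring

theorem cos_sub_cos_lt_mul_sin {θ x : ℝ} (hθ : 0 ≤ θ) (hθx : θ < x) (hx : x ≤ π / 2) :
    cos θ - cos x < (x - θ) * sin x := by
  obtain ⟨c, hc, hcd⟩ := exists_hasDerivAt_eq_slope cos (fun y => -sin y) hθx
    continuous_cos.continuousOn fun y _ => hasDerivAt_cos y
  have hsin : sin c < sin x :=
    strictMonoOn_sin ⟨by linarith [hc.1], by linarith [hc.2]⟩ ⟨by linarith, hx⟩ hc.2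
  rw [eq_div_iff (sub_pos.2 hθx).ne'] at hcd
  nlinarith [mul_lt_mul_of_pos_left hsin (sub_pos.2 hθx)]

theorem sin_mul_cos_sub_cos_lt_of_nonpos {θ x : ℝ} (hθ : θ ≤ 0) (hx0 : 0 < x) (hxπ : x < π) :
    sin x * (cos θ - cos x) < (x - θ) * (1 - cos θ * cos x) := by
  have hsin : 0 < sin x := sin_pos_of_pos_of_lt_pi hx0 hxπ
  have hcos : cos x < 1 := cos_zero ▸ cos_lt_cos_of_nonneg_of_le_pi le_rfl hxπ.le hx0
  have hD : cos θ - cos x ≤ 1 - cos θ * cos x := by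
    nlinarith [cos_le_one θ, neg_one_le_cos x]
  have hcos' : -1 < cos x :=
    cos_pi ▸ cos_lt_cos_of_nonneg_of_le_pi hx0.le le_rfl hxπ
  have hpos : 0 < 1 - cos θ * cos x := by
    nlinarith [mul_nonneg (sub_nonneg.2 (cos_le_one θ)) (neg_le_iff_add_nonneg.1 hcos'.le),
      mul_nonneg (neg_le_iff_add_nonneg.1 (neg_one_le_cos θ)) (sub_pos.2 hcos).le,
      mul_pos (sub_pos.2 hcos) (neg_lt_iff_pos_add.1 hcos')]
  calc sin x * (cos θ - cos x) ≤ sin x * (1 - cos θ * cos x) := by gcongr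
    _ < (x - θ) * (1 - cos θ * cos x) := by gcongr; linarith [sin_lt hx0]

theorem sin_mul_cos_sub_cos_lt_of_pi_div_two_lt {θ x : ℝ} (hθ0 : 0 ≤ θ) (hθ : θ ≤ π / 2)
    (hx : π / 2 < x) (hxπ : x < π) :
    sin x * (cos θ - cos x) < (x - θ) * (1 - cos θ * cos x) := by
  have hcθ : 0 ≤ cos θ := cos_nonneg_of_mem_Icc ⟨by linarith, hθ⟩
  have hcx : cos x < 0 := cos_neg_of_pi_div_two_lt_of_lt hx (by linarith)
  have hθ' : cos θ ≤ π / 2 - θ := by rw [← sin_pi_div_two_sub]; exact sin_le (by linarith)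
  have hx' : -(2 * sin x * cos x) < 2 * x - π := by
    simpa [sin_sub_pi, sin_two_mul] using sin_lt (x := 2 * x - π) (by linarith)
  nlinarith [sin_le_one x,
    mul_nonneg (sub_nonneg.2 (hθ.trans hx.le)) (mul_nonneg hcθ (neg_nonneg.2 hcx.le))]

/-- Real induction gives `g ≤ 0` on `[a, b)`; a zero inside would then be a point where `g`
crosses downwards, so `g > 0` just to its left. -/
theorem ContinuousOn.neg_of_deriv_neg_of_eq_zero {g : ℝ → ℝ} {a b : ℝ}
    (hg : ContinuousOn g (Ico a b)) (hzero : ∀ x ∈ Ico a b, g x = 0 → deriv g x < 0)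
    (ha : g a ≤ 0) : ∀ x ∈ Ioo a b, g x < 0 := by
  have hright : ∀ x ∈ Ico a b, g x ≤ 0 → ∀ᶠ y in 𝓝[>] x, g y < 0 := by
    intro x hx hgx
    rcases hgx.lt_or_eq with hlt | heq
    · have hcont : ContinuousWithinAt g (Ioi x) x :=
        (hg x hx).mono_of_mem_nhdsWithin (Ico_mem_nhdsGT_of_mem hx)
      exact hcont.eventually (gt_mem_nhds hlt)
    · filter_upwards [nhdsWithin_le_nhds (eventually_nhdsWithin_sign_eq_of_deriv_neg
        (hzero x hx heq) heq), self_mem_nhdsWithin] with y hy (hxy : x < y)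
      rwa [sign_eq_neg_one_iff.mpr (sub_neg.mpr hxy), sign_eq_neg_one_iff] at hy
  have hle : ∀ x ∈ Ioo a b, g x ≤ 0 := by
    intro x hx
    have hclosed : IsClosed ({y | g y ≤ 0} ∩ Icc a x) := by
      rw [inter_comm]
      exact (hg.mono (Icc_subset_Ico_right hx.2)).preimage_isClosed_of_isClosed isClosed_Icc
        isClosed_Iic
    refine IsClosed.Icc_subset_of_forall_mem_nhdsWithin hclosed ha ?_ ⟨hx.1.le, le_rfl⟩
    exact fun y hy => (hright y ⟨hy.2.1, hy.2.2.trans hx.2⟩ hy.1).mono fun _ h => h.le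
  intro x hx
  refine (hle x hx).lt_of_ne fun heq => ?_
  obtain ⟨y, hy, hyx⟩ := ((eventually_nhdsWithin_sign_eq_of_deriv_neg
    (hzero x (Ioo_subset_Ico_self hx) heq) heq).filter_mono nhdsWithin_le_nhds |>.and
    (Ioo_mem_nhdsLT hx.1)).exists (f := 𝓝[<] x)
  rw [sign_eq_one_iff.mpr (sub_pos.mpr hyx.2), sign_eq_one_iff] at hy
  exact (hle y ⟨hyx.1, hyx.2.trans hx.2⟩).not_gt hy

theorem cosRatioNum_pos {p θ x : ℝ} (hp : p ≤ 1) (hθ : 0 ≤ θ) (hθx : θ < x) (hx : x ≤ π / 2) :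
    0 < cosRatioNum p θ x := by
  have hD : 0 < cos θ - cos x := sub_pos.2 (cos_lt_cos_of_nonneg_of_le_pi hθ (by linarith) hθx)
  have := cos_sub_cos_lt_mul_sin hθ hθx hx
  unfold cosRatioNum
  nlinarith

theorem cosRatioNum_eq_zero_iff {p θ x : ℝ} :
    cosRatioNum p θ x = 0 ↔ (x - θ) * sin x = p * (cos θ - cos x) := by
  unfold cosRatioNum
  constructor <;> intro h <;> linarith

theorem sin_sq_lt_of_cosRatioNum_eq_zero {p θ w : ℝ} (hp : 0 < θ → p ≤ 1) (hθ : θ ≤ π / 2)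
    (hw : w ∈ Ioo |θ| π) (hzero : cosRatioNum p θ w = 0) :
    sin w ^ 2 < p * (1 - cos θ * cos w) := by
  have hw0 : 0 < w := (abs_nonneg θ).trans_lt hw.1
  have hsin : 0 < sin w := sin_pos_of_pos_of_lt_pi hw0 hw.2
  have hD : 0 < cos θ - cos w :=
    sub_pos.2 (cos_abs θ ▸ cos_lt_cos_of_nonneg_of_le_pi (abs_nonneg θ) hw.2.le hw.1)
  have hkey : sin w * (cos θ - cos w) < (w - θ) * (1 - cos θ * cos w) := by
    rcases le_or_gt θ 0 with hθ0 | hθ0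
    · exact sin_mul_cos_sub_cos_lt_of_nonpos hθ0 hw0 hw.2
    · have hwπ2 : π / 2 < w := by
        by_contra! hle
        have := cosRatioNum_pos (hp hθ0) hθ0.le ((le_abs_self θ).trans_lt hw.1) hle
        exact this.ne' hzero
      exact sin_mul_cos_sub_cos_lt_of_pi_div_two_lt hθ0.le hθ hwπ2 hw.2
  have hprod := cosRatioNum_eq_zero_iff.1 hzero
  refine lt_of_mul_lt_mul_right (a := cos θ - cos w) ?_ hD.le
  calc sin w ^ 2 * (cos θ - cos w) = sin w * (sin w * (cos θ - cos w)) := by ring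
    _ < sin w * ((w - θ) * (1 - cos θ * cos w)) := mul_lt_mul_of_pos_left hkey hsin
    _ = p * (1 - cos θ * cos w) * (cos θ - cos w) := by
      linear_combination (1 - cos θ * cos w) * hprod

theorem deriv_cosRatioNum_neg {p θ w : ℝ} (hp : 0 < θ → p ≤ 1) (hθ : θ ≤ π / 2)
    (hw : w ∈ Ioo |θ| π) (hzero : cosRatioNum p θ w = 0) :
    deriv (cosRatioNum p θ) w < 0 := by
  have hsin : 0 < sin w := sin_pos_of_pos_of_lt_pi ((abs_nonneg θ).trans_lt hw.1) hw.2
  have hprod := cosRatioNum_eq_zero_iff.1 hzero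
  have hlt := sin_sq_lt_of_cosRatioNum_eq_zero hp hθ hw hzero
  rw [(hasDerivAt_cosRatioNum p θ w).deriv]
  refine neg_of_mul_neg_right (a := sin w) ?_ hsin.le
  calc sin w * ((1 - p) * sin w + (w - θ) * cos w)
      = sin w ^ 2 - p * (sin w ^ 2 + cos w ^ 2 - cos θ * cos w) := by
        linear_combination cos w * hprod
    _ < 0 := by rw [sin_sq_add_cos_sq]; linarith

theorem cosRatioNum_neg_of_nonpos {p θ z : ℝ} (hp : 0 < θ → p ≤ 1) (hθ : θ ≤ π / 2)
    (hz : |θ| < z) (hgz : cosRatioNum p θ z ≤ 0) : ∀ x ∈ Ioo z π, cosRatioNum p θ x < 0 := by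
  have hcont : Continuous (cosRatioNum p θ) :=
    continuous_iff_continuousAt.2 fun x => (hasDerivAt_cosRatioNum p θ x).continuousAt
  exact hcont.continuousOn.neg_of_deriv_neg_of_eq_zero
    (fun x hx => deriv_cosRatioNum_neg hp hθ ⟨hz.trans_le hx.1, hx.2⟩) hgz

theorem cosRatioNum_pos_of_lt {p θ φ : ℝ} (hp : 0 < θ → p ≤ 1) (hθ : θ ≤ π / 2)
    (hφ : φ < π) (hzero : cosRatioNum p θ φ = 0) : ∀ x ∈ Ioo |θ| φ, 0 < cosRatioNum p θ x :=
  fun _ hx => not_le.1 fun hle =>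
    (cosRatioNum_neg_of_nonpos hp hθ hx.1 hle φ ⟨hx.2, hφ⟩).ne hzero

theorem continuousOn_cosRatio (p θ : ℝ) : ContinuousOn (cosRatio p θ) (Ioi θ) :=
  fun _ hx => (hasDerivAt_cosRatio hx).continuousAt.continuousWithinAt

theorem strictMonoOn_cosRatio {p θ φ : ℝ} (hp : 0 < θ → p ≤ 1) (hθ : θ ≤ π / 2)
    (hφ : φ < π) (hzero : cosRatioNum p θ φ = 0) : StrictMonoOn (cosRatio p θ) (Ioc |θ| φ) := by
  have hθx : ∀ {x}, |θ| < x → θ < x := (le_abs_self θ).trans_lt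
  refine strictMonoOn_of_deriv_pos (convex_Ioc _ _)
    ((continuousOn_cosRatio p θ).mono fun x hx => hθx hx.1) fun x hx => ?_
  rw [interior_Ioc] at hx
  rw [(hasDerivAt_cosRatio (hθx hx.1)).deriv]
  exact div_pos (cosRatioNum_pos_of_lt hp hθ hφ hzero x hx)
    (rpow_pos_of_pos (sub_pos.2 (hθx hx.1)) _)

theorem strictAntiOn_cosRatio {p θ φ : ℝ} (hp : 0 < θ → p ≤ 1) (hθ : θ ≤ π / 2)
    (hφ : |θ| < φ) (hzero : cosRatioNum p θ φ = 0) : StrictAntiOn (cosRatio p θ) (Icc φ π) := by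
  have hθx : ∀ {x}, φ ≤ x → θ < x := fun h => ((le_abs_self θ).trans_lt hφ).trans_le h
  refine strictAntiOn_of_deriv_neg (convex_Icc _ _)
    ((continuousOn_cosRatio p θ).mono fun x hx => hθx hx.1) fun x hx => ?_
  rw [interior_Icc] at hx
  rw [(hasDerivAt_cosRatio (hθx hx.1.le)).deriv]
  exact div_neg_of_neg_of_pos (cosRatioNum_neg_of_nonpos hp hθ hφ hzero.le x hx)
    (rpow_pos_of_pos (sub_pos.2 (hθx hx.1.le)) _)

theorem cosRatio_nonpos {p θ x : ℝ} (hθπ : |θ| ≤ π) (hθx : θ < x) (hx : x ≤ |θ|) :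
    cosRatio p θ x ≤ 0 := by
  have hxθ : |x| ≤ |θ| := abs_le.2 ⟨(neg_abs_le θ).trans hθx.le, hx⟩
  have hcos : cos θ ≤ cos x := by
    rw [← cos_abs θ, ← cos_abs x]
    exact cos_le_cos_of_nonneg_of_le_pi (abs_nonneg x) hθπ hxθ
  exact div_nonpos_of_nonpos_of_nonneg (sub_nonpos.2 hcos) (rpow_nonneg (sub_pos.2 hθx).le _)

theorem cosRatio_le_cosRatio_pi {p θ x : ℝ} (hp : 0 ≤ p) (hθ : θ < π) (hx : π ≤ x) :
    cosRatio p θ x ≤ cosRatio p θ π := by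
  have hden : 0 < (π - θ) ^ p := rpow_pos_of_pos (sub_pos.2 hθ) p
  unfold cosRatio
  rw [cos_pi, sub_neg_eq_add]
  calc (cos θ - cos x) / (x - θ) ^ p ≤ (cos θ + 1) / (x - θ) ^ p :=
        div_le_div_of_nonneg_right (by linarith [neg_one_le_cos x])
          (rpow_nonneg (by linarith) p)
    _ ≤ (cos θ + 1) / (π - θ) ^ p := by
        gcongr; linarith [neg_one_le_cos θ]

theorem cosRatio_lt_cosRatio {p θ φ x : ℝ} (hp0 : 0 ≤ p) (hp : 0 < θ → p ≤ 1)
    (hθ : θ ≤ π / 2) (hφ : φ ∈ Ioo |θ| π) (hzero : cosRatioNum p θ φ = 0) (hθx : θ < x)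
    (hxφ : x ≠ φ) : cosRatio p θ x < cosRatio p θ φ := by
  have hθφ : θ < φ := (le_abs_self θ).trans_lt hφ.1
  have hθπ : |θ| < π := hφ.1.trans hφ.2
  have hanti := strictAntiOn_cosRatio hp hθ hφ.1 hzero
  rcases le_or_gt x |θ| with hx | hx
  · have hcos : cos φ < cos θ :=
      cos_abs θ ▸ cos_lt_cos_of_nonneg_of_le_pi (abs_nonneg θ) hφ.2.le hφ.1
    exact (cosRatio_nonpos hθπ.le hθx hx).trans_lt
      (div_pos (sub_pos.2 hcos) (rpow_pos_of_pos (sub_pos.2 hθφ) p))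
  rcases hxφ.lt_or_gt with hxφ | hφx
  · exact strictMonoOn_cosRatio hp hθ hφ.2 hzero ⟨hx, hxφ.le⟩ ⟨hφ.1, le_rfl⟩ hxφ
  rcases le_or_gt x π with hxπ | hπx
  · exact hanti ⟨le_rfl, hφ.2.le⟩ ⟨hφx.le, hxπ⟩ hφx
  · exact (cosRatio_le_cosRatio_pi hp0 (hθφ.trans hφ.2) hπx.le).trans_lt
      (hanti ⟨le_rfl, hφ.2.le⟩ ⟨hφ.2.le, le_rfl⟩ hφ.2)

theorem A_eq_cosRatio {p θ φ : ℝ} (hp0 : 0 ≤ p) (hp : 0 < θ → p ≤ 1) (hθ : θ ≤ π / 2)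
    (hφ : φ ∈ Ioo |θ| π) (hzero : cosRatioNum p θ φ = 0) : A p θ = cosRatio p θ φ := by
  refine IsGreatest.csSup_eq ⟨⟨φ, ⟨(le_abs_self θ).trans_lt hφ.1, hφ.2⟩, rfl⟩, ?_⟩
  rintro _ ⟨x, hx, rfl⟩
  rcases eq_or_ne x φ with rfl | hxφ
  · exact le_rfl
  · exact (cosRatio_lt_cosRatio hp0 hp hθ hφ hzero hx.1 hxφ).le

theorem cos_eq_sub_mul_rpow_iff {p θ x c : ℝ} (hθx : θ < x) :
    cos x = cos θ - c * (x - θ) ^ p ↔ cosRatio p θ x = c := by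
  rw [cosRatio, div_eq_iff (rpow_pos_of_pos (sub_pos.2 hθx) p).ne']
  constructor <;> intro h <;> linarith

theorem stmt3_general (p θ φ : ℝ) (h : Dom p θ)
    (hφ : φ ∈ Set.Ioo |θ| Real.pi ∧
      p * (Real.cos φ - Real.cos θ) + (φ - θ) * Real.sin φ = 0) :
    ∀ x : ℝ, θ ≤ x →
      (Real.cos x = Real.cos θ - A p θ * (x - θ) ^ p ↔ x = θ ∨ x = φ) := by
  obtain ⟨hp0, hp, hθ⟩ : 0 < p ∧ (0 < θ → p ≤ 1) ∧ θ ≤ π / 2 := by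
    rcases h with ⟨⟨hp0, hp1⟩, -, hθ⟩ | ⟨⟨hp1, -⟩, -, hθ⟩
    · exact ⟨hp0, fun _ => hp1, hθ⟩
    · exact ⟨by linarith, fun hθ' => absurd hθ (by linarith), by linarith [pi_pos]⟩
  obtain ⟨hφ, hzero⟩ := hφ
  intro x hθx
  rcases hθx.eq_or_lt with rfl | hθx
  · simp [zero_rpow hp0.ne']
  have hxθ : x ≠ θ := hθx.ne'
  rw [cos_eq_sub_mul_rpow_iff hθx, A_eq_cosRatio hp0.le hp hθ hφ hzero]
  simp only [hxθ, false_or]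
  exact ⟨fun heq => by_contra fun hxφ =>
    (cosRatio_lt_cosRatio hp0.le hp hθ hφ hzero hθx hxφ).ne heq, fun hxφ => hxφ ▸ rfl⟩

theorem stmt3 (p θ φ : ℝ) (h : Dom p θ) (hne : (p, θ) ≠ ((2 : ℝ), (0 : ℝ)))
    (hφ : φ ∈ Set.Ioo |θ| Real.pi ∧
      p * (Real.cos φ - Real.cos θ) + (φ - θ) * Real.sin φ = 0) :
    ∀ x : ℝ, θ ≤ x →
      (Real.cos x = Real.cos θ - A p θ * (x - θ) ^ p ↔ x = θ ∨ x = φ) :=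
  stmt3_general p θ φ h hφ
end

section
/- Let n ∈ ℕ, let a : Fin n → ℂ satisfy ∑_j ‖a_j‖² = 1, let E : Fin n → ℝ, let τ ≥ 0, and set √ε = ‖∑_j ‖a_j‖²·exp(−i·E_j·τ)‖. Let p ∈ (0,2) and suppose φ_p(0) ≤ arccos(√ε). Then for every E_r ∈ ℝ: τ^p · ∑_j ‖a_j‖²·|E_j − E_r|^p ≥ (arccos √ε)^p. -/
/-!
Let `θ = arccos √ε`. Since `t ↦ t cot t` decreases, `φ ≤ θ` turns the defining equation of `φ`
into `θ sin θ ≤ p (1 - cos θ)`, which is what makes `F x = sin θ · x ^ p + p θ ^ (p - 1) cos x`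
attain its minimum over `x ≥ 0` at `x = θ`. Averaging `F θ ≤ F |(E_j - E_r) τ|` with weights
`‖a_j‖²` and using `∑ ‖a_j‖² cos ((E_j - E_r) τ) = Re (e^{i E_r τ} ∑ ‖a_j‖² e^{-i E_j τ}) ≤ √ε`,
which is `cos θ`, leaves `θ ^ p ≤ τ ^ p ∑ ‖a_j‖² |E_j - E_r| ^ p`.
-/

open Real Set

lemma antitoneOn_mul_cos_div_sin : AntitoneOn (fun t => t * cos t / sin t) (Ioo 0 π) := by
  have hderiv : ∀ t ∈ Ioo 0 π, HasDerivAt (fun t => t * cos t / sin t)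
      ((sin t * cos t - t) / sin t ^ 2) t := fun t ht =>
    (((hasDerivAt_id' t).mul (hasDerivAt_cos t)).div (hasDerivAt_sin t)
      (sin_pos_of_pos_of_lt_pi ht.1 ht.2).ne').congr_deriv
      (by simp only [Pi.mul_apply]; congr 1; linear_combination (-t) * sin_sq_add_cos_sq t)
  refine antitoneOn_of_deriv_nonpos (convex_Ioo 0 π)
    (fun t ht => (hderiv t ht).continuousAt.continuousWithinAt) ?_ ?_ <;>
    rw [interior_Ioo]
  · exact fun t ht => (hderiv t ht).differentiableAt.differentiableWithinAt
  · intro t ht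
    rw [(hderiv t ht).deriv]
    have hsin : 0 < sin t := sin_pos_of_pos_of_lt_pi ht.1 ht.2
    have : sin t * cos t ≤ t :=
      (mul_le_of_le_one_right hsin.le (cos_le_one t)).trans (sin_le ht.1.le)
    exact div_nonpos_of_nonpos_of_nonneg (by linarith) (sq_nonneg _)

lemma mul_cos_mul_sin_le {a b : ℝ} (ha : 0 < a) (hab : a ≤ b) (hb : b < π) :
    b * cos b * sin a ≤ a * cos a * sin b := by
  have hsa : 0 < sin a := sin_pos_of_pos_of_lt_pi ha (hab.trans_lt hb)
  have hsb : 0 < sin b := sin_pos_of_pos_of_lt_pi (ha.trans_le hab) hb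
  have := antitoneOn_mul_cos_div_sin ⟨ha, hab.trans_lt hb⟩ ⟨ha.trans_le hab, hb⟩ hab
  rwa [div_le_div_iff₀ hsb hsa] at this

lemma mul_sin_le_mul_one_sub_cos {p φ θ : ℝ} (hφ : 0 < φ)
    (hφp : p * (cos φ - 1) + φ * sin φ = 0) (hφθ : φ ≤ θ) (hθ : θ < 2 * π) :
    θ * sin θ ≤ p * (1 - cos θ) := by
  obtain ⟨u, rfl⟩ : ∃ u, φ = 2 * u := ⟨φ / 2, by ring⟩
  obtain ⟨v, rfl⟩ : ∃ v, θ = 2 * v := ⟨θ / 2, by ring⟩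
  have hu : 0 < u := by linarith
  have hv : v < π := by linarith
  have hsu : 0 < sin u := sin_pos_of_pos_of_lt_pi hu (by linarith)
  have hsv : 0 < sin v := sin_pos_of_pos_of_lt_pi (by linarith) hv
  simp only [sin_two_mul, cos_two_mul, cos_sq'] at hφp ⊢
  -- half angles turn the equation for `φ` into `2 u cos u = p sin u`
  have hu_eq : 2 * u * cos u = p * sin u := by
    have : sin u * (2 * u * cos u - p * sin u) = 0 := by linear_combination hφp / 2
    linarith [(mul_eq_zero.mp this).resolve_left hsu.ne']
  have hv_le : 2 * v * cos v ≤ p * sin v := by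
    refine le_of_mul_le_mul_right ?_ hsu
    nlinarith [mul_cos_mul_sin_le hu (by linarith : u ≤ v) hv]
  nlinarith [mul_le_mul_of_nonneg_left hv_le hsv.le]

lemma mul_cos_le_sub_one_mul_sin {p θ : ℝ} (hθ : θ ∈ Ioo 0 π)
    (hk : θ * sin θ ≤ p * (1 - cos θ)) : θ * cos θ ≤ (p - 1) * sin θ := by
  have hsθ : 0 < sin θ := sin_pos_of_pos_of_lt_pi hθ.1 hθ.2
  have hcos : cos θ < 1 := by nlinarith [sin_sq_add_cos_sq θ, cos_le_one θ]
  have h : θ * (1 + cos θ) ≤ p * sin θ := by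
    have e : θ * sin θ * sin θ = (1 - cos θ) * (θ * (1 + cos θ)) := by
      linear_combination θ * sin_sq_add_cos_sq θ
    refine le_of_mul_le_mul_left ?_ (sub_pos.mpr hcos)
    nlinarith [mul_le_mul_of_nonneg_right hk hsθ.le]
  nlinarith [sin_le hθ.1.le]

theorem min_le_of_deriv_neg_imp_deriv_nonpos {f : ℝ → ℝ} {a b x : ℝ}
    (hf : ContinuousOn f (Icc a b)) (hf' : DifferentiableOn ℝ f (Ioo a b))
    (hsign : ∀ y ∈ Ioo a b, ∀ z ∈ Ioo a b, y < z → deriv f y < 0 → deriv f z ≤ 0)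
    (hx : x ∈ Icc a b) :
    min (f a) (f b) ≤ f x := by
  by_cases h : ∃ y ∈ Ioo a x, deriv f y < 0
  · obtain ⟨y, hy, hfy⟩ := h
    have hanti : AntitoneOn f (Icc x b) := by
      refine antitoneOn_of_deriv_nonpos (convex_Icc x b)
        (hf.mono (Icc_subset_Icc_left hx.1)) ?_ ?_ <;> rw [interior_Icc]
      · exact hf'.mono (Ioo_subset_Ioo_left hx.1)
      · exact fun z hz => hsign y ⟨hy.1, hy.2.trans_le hx.2⟩ z
          ⟨hx.1.trans_lt hz.1, hz.2⟩ (hy.2.trans hz.1) hfy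
    exact min_le_of_right_le (hanti ⟨le_rfl, hx.2⟩ ⟨hx.2, le_rfl⟩ hx.2)
  · push Not at h
    have hmono : MonotoneOn f (Icc a x) := by
      refine monotoneOn_of_deriv_nonneg (convex_Icc a x)
        (hf.mono (Icc_subset_Icc_right hx.2)) ?_ ?_ <;> rw [interior_Icc]
      · exact hf'.mono (Ioo_subset_Ioo_right hx.2)
      · exact h
    exact min_le_of_left_le (hmono ⟨le_rfl, hx.1⟩ ⟨hx.1, le_rfl⟩ hx.1)

lemma hasDerivAt_sin_div_rpow (q : ℝ) {y : ℝ} (hy : 0 < y) :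
    HasDerivAt (fun t => sin t / t ^ q)
      (y ^ (q - 1) / (y ^ q) ^ 2 * (y * cos y - q * sin y)) y := by
  refine ((hasDerivAt_sin y).div (hasDerivAt_rpow_const (Or.inl hy.ne'))
    (rpow_pos_of_pos hy q).ne').congr_deriv ?_
  rw [rpow_sub_one hy.ne']
  field_simp

lemma sin_div_rpow_min_le {q y z w : ℝ} (hy : 0 < y) (hyz : y ≤ z) (hzw : z ≤ w)
    (hw : w < π) :
    min (sin y / y ^ q) (sin w / w ^ q) ≤ sin z / z ^ q := by
  have hderiv : ∀ t ∈ Icc y w, HasDerivAt (fun t => sin t / t ^ q)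
      (t ^ (q - 1) / (t ^ q) ^ 2 * (t * cos t - q * sin t)) t :=
    fun t ht => hasDerivAt_sin_div_rpow q (hy.trans_le ht.1)
  refine min_le_of_deriv_neg_imp_deriv_nonpos
    (fun t ht => (hderiv t ht).continuousAt.continuousWithinAt)
    (fun t ht => (hderiv t (Ioo_subset_Icc_self ht)).differentiableAt.differentiableWithinAt)
    ?_ ⟨hyz, hzw⟩
  intro s hs t ht hst hneg
  have hs0 : 0 < s := hy.trans hs.1
  have ht0 : 0 < t := hy.trans ht.1
  rw [(hderiv s (Ioo_subset_Icc_self hs)).deriv] at hneg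
  rw [(hderiv t (Ioo_subset_Icc_self ht)).deriv]
  have hs_lt : s * cos s < q * sin s :=
    sub_neg.mp (neg_of_mul_neg_right hneg (by positivity))
  have hss : 0 < sin s := sin_pos_of_pos_of_lt_pi hs0 (hs.2.trans hw)
  have ht_le : t * cos t ≤ q * sin t := by
    refine le_of_mul_le_mul_right ?_ hss
    nlinarith [mul_cos_mul_sin_le hs0 hst.le (ht.2.trans hw),
      sin_pos_of_pos_of_lt_pi ht0 (ht.2.trans hw)]
  exact mul_nonpos_of_nonneg_of_nonpos (by positivity) (by linarith)

lemma sin_div_rpow_antitoneOn {q θ : ℝ} (hθ : 0 < θ) (hq : θ * cos θ ≤ q * sin θ) :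
    AntitoneOn (fun t => sin t / t ^ q) (Icc θ π) := by
  have hderiv : ∀ t ∈ Icc θ π, HasDerivAt (fun t => sin t / t ^ q)
      (t ^ (q - 1) / (t ^ q) ^ 2 * (t * cos t - q * sin t)) t :=
    fun t ht => hasDerivAt_sin_div_rpow q (hθ.trans_le ht.1)
  refine antitoneOn_of_deriv_nonpos (convex_Icc θ π)
    (fun t ht => (hderiv t ht).continuousAt.continuousWithinAt) ?_ ?_ <;> rw [interior_Icc]
  · exact fun t ht => (hderiv t (Ioo_subset_Icc_self ht)).differentiableAt.differentiableWithinAt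
  · intro t ht
    rw [(hderiv t (Ioo_subset_Icc_self ht)).deriv]
    have ht0 : 0 < t := hθ.trans ht.1
    have hsθ : 0 < sin θ := sin_pos_of_pos_of_lt_pi hθ (ht.1.trans ht.2)
    have ht_le : t * cos t ≤ q * sin t := by
      refine le_of_mul_le_mul_right ?_ hsθ
      nlinarith [mul_cos_mul_sin_le hθ ht.1.le ht.2, sin_pos_of_pos_of_lt_pi ht0 ht.2]
    exact mul_nonpos_of_nonneg_of_nonpos (by positivity) (by linarith)

lemma hasDerivAt_sin_mul_rpow_add_mul_cos {p θ y : ℝ} (hθ : 0 < θ) (hy : 0 < y) :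
    HasDerivAt (fun x => sin θ * x ^ p + p * θ ^ (p - 1) * cos x)
      (p * y ^ (p - 1) * θ ^ (p - 1) * (sin θ / θ ^ (p - 1) - sin y / y ^ (p - 1))) y := by
  refine (((hasDerivAt_rpow_const (Or.inl hy.ne')).const_mul (sin θ)).add
    ((hasDerivAt_cos y).const_mul (p * θ ^ (p - 1)))).congr_deriv ?_
  field_simp [(rpow_pos_of_pos hy (p - 1)).ne', (rpow_pos_of_pos hθ (p - 1)).ne']
  ring

lemma monotoneOn_sin_mul_rpow_add_mul_cos {p θ : ℝ} (hp : 0 ≤ p) (hθ : θ ∈ Ioo 0 π)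
    (hk : θ * sin θ ≤ p * (1 - cos θ)) :
    MonotoneOn (fun x => sin θ * x ^ p + p * θ ^ (p - 1) * cos x) (Icc θ π) := by
  have hderiv : ∀ y ∈ Icc θ π, HasDerivAt (fun x => sin θ * x ^ p + p * θ ^ (p - 1) * cos x)
      (p * y ^ (p - 1) * θ ^ (p - 1) * (sin θ / θ ^ (p - 1) - sin y / y ^ (p - 1))) y :=
    fun y hy => hasDerivAt_sin_mul_rpow_add_mul_cos hθ.1 (hθ.1.trans_le hy.1)
  refine monotoneOn_of_deriv_nonneg (convex_Icc θ π)
    (fun y hy => (hderiv y hy).continuousAt.continuousWithinAt) ?_ ?_ <;> rw [interior_Icc]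
  · exact fun y hy => (hderiv y (Ioo_subset_Icc_self hy)).differentiableAt.differentiableWithinAt
  · intro y hy
    rw [(hderiv y (Ioo_subset_Icc_self hy)).deriv]
    have hψ := sin_div_rpow_antitoneOn hθ.1 (mul_cos_le_sub_one_mul_sin hθ hk)
      ⟨le_rfl, hθ.2.le⟩ (Ioo_subset_Icc_self hy) hy.1.le
    have := rpow_pos_of_pos (hθ.1.trans hy.1) (p - 1)
    have := rpow_pos_of_pos hθ.1 (p - 1)
    exact mul_nonneg (by positivity) (sub_nonneg.mpr hψ)

theorem sin_mul_rpow_add_mul_cos_le {p θ x : ℝ} (hp : 0 < p) (hθ : θ ∈ Ioo 0 π)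
    (hk : θ * sin θ ≤ p * (1 - cos θ)) (hx : 0 ≤ x) :
    sin θ * θ ^ p + p * θ ^ (p - 1) * cos θ ≤ sin θ * x ^ p + p * θ ^ (p - 1) * cos x := by
  obtain ⟨hθ0, hθπ⟩ := hθ
  set F : ℝ → ℝ := fun x => sin θ * x ^ p + p * θ ^ (p - 1) * cos x with hF
  change F θ ≤ F x
  have hθq : 0 < θ ^ (p - 1) := rpow_pos_of_pos hθ0 (p - 1)
  have hFc : Continuous F := by
    have := continuous_rpow_const hp.le
    fun_prop
  have hF0 : F θ ≤ F 0 := by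
    have hθp : θ ^ p = θ ^ (p - 1) * θ := by rw [← rpow_add_one hθ0.ne']; ring_nf
    simp only [hF, zero_rpow hp.ne', cos_zero, hθp]
    nlinarith
  have hmono := monotoneOn_sin_mul_rpow_add_mul_cos hp.le ⟨hθ0, hθπ⟩ hk
  rcases le_total x θ with hxθ | hθx
  · -- on `[0, θ]`, `F` first increases and then decreases, since `ψ t = sin t / t ^ (p - 1)`
    -- is unimodal and `F'` has the sign of `ψ θ - ψ`
    refine min_eq_right hF0 ▸ min_le_of_deriv_neg_imp_deriv_nonpos hFc.continuousOn
      (fun y hy => (hasDerivAt_sin_mul_rpow_add_mul_cos hθ0 hy.1).differentiableAt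
        |>.differentiableWithinAt) ?_ ⟨hx, hxθ⟩
    intro y hy z hz hyz hneg
    have := rpow_pos_of_pos hy.1 (p - 1)
    have := rpow_pos_of_pos hz.1 (p - 1)
    rw [(hasDerivAt_sin_mul_rpow_add_mul_cos hθ0 hy.1).deriv] at hneg
    rw [(hasDerivAt_sin_mul_rpow_add_mul_cos hθ0 hz.1).deriv]
    have hψ : sin θ / θ ^ (p - 1) < sin y / y ^ (p - 1) :=
      sub_neg.mp (neg_of_mul_neg_right hneg (by positivity))
    have := sin_div_rpow_min_le (q := p - 1) hy.1 hyz.le hz.2.le hθπ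
    exact mul_nonpos_of_nonneg_of_nonpos (by positivity)
      (sub_nonpos.mpr ((min_eq_right hψ.le).symm.trans_le this))
  rcases le_total x π with hxπ | hπx
  · exact hmono ⟨le_rfl, hθπ.le⟩ ⟨hθx, hxπ⟩ hθx
  · refine (hmono ⟨le_rfl, hθπ.le⟩ ⟨hθπ.le, le_rfl⟩ hθπ.le).trans ?_
    have := mul_le_mul_of_nonneg_left (rpow_le_rpow pi_pos.le hπx hp.le)
      (sin_pos_of_pos_of_lt_pi hθ0 hθπ).le
    have := mul_le_mul_of_nonneg_left (neg_one_le_cos x) (by positivity : 0 ≤ p * θ ^ (p - 1))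
    simp only [hF, cos_pi]
    linarith

theorem rpow_le_sum_mul_abs_rpow {ι : Type*} (s : Finset ι) {w x : ι → ℝ} {p θ : ℝ}
    (hw : ∀ j ∈ s, 0 ≤ w j) (hw1 : ∑ j ∈ s, w j = 1) (hp : 0 < p) (hθ : θ ∈ Ioo 0 π)
    (hk : θ * sin θ ≤ p * (1 - cos θ)) (hcos : ∑ j ∈ s, w j * cos (x j) ≤ cos θ) :
    θ ^ p ≤ ∑ j ∈ s, w j * |x j| ^ p := by
  set C := p * θ ^ (p - 1)
  have hsθ : 0 < sin θ := sin_pos_of_pos_of_lt_pi hθ.1 hθ.2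
  have hC : 0 ≤ C := by have := rpow_pos_of_pos hθ.1 (p - 1); positivity
  have hsum : sin θ * θ ^ p + C * cos θ ≤
      sin θ * ∑ j ∈ s, w j * |x j| ^ p + C * ∑ j ∈ s, w j * cos (x j) := by
    calc sin θ * θ ^ p + C * cos θ = ∑ j ∈ s, w j * (sin θ * θ ^ p + C * cos θ) := by
          rw [← Finset.sum_mul, hw1, one_mul]
      _ ≤ ∑ j ∈ s, w j * (sin θ * |x j| ^ p + C * cos |x j|) :=
          Finset.sum_le_sum fun j hj => mul_le_mul_of_nonneg_left
            (sin_mul_rpow_add_mul_cos_le hp hθ hk (abs_nonneg _)) (hw j hj)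
      _ = _ := by
          simp only [cos_abs, Finset.mul_sum, ← Finset.sum_add_distrib]
          exact Finset.sum_congr rfl fun j _ => by ring
  nlinarith [mul_le_mul_of_nonneg_left hcos hC]

lemma sum_mul_cos_sub_le_norm {ι : Type*} (s : Finset ι) (w t : ι → ℝ) (c : ℝ) :
    ∑ j ∈ s, w j * cos (t j - c) ≤ ‖∑ j ∈ s, (w j : ℂ) * Complex.exp (-Complex.I * t j)‖ := by
  set z := ∑ j ∈ s, (w j : ℂ) * Complex.exp (-Complex.I * t j)
  calc ∑ j ∈ s, w j * cos (t j - c) = (Complex.exp (c * Complex.I) * z).re := by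
        simp only [z, Finset.mul_sum, Complex.re_sum]
        refine Finset.sum_congr rfl fun j _ => ?_
        rw [mul_left_comm, ← Complex.exp_add,
          show c * Complex.I + -Complex.I * t j = ((c - t j : ℝ) : ℂ) * Complex.I by
            push_cast; ring,
          Complex.re_ofReal_mul, Complex.exp_ofReal_mul_I_re, ← cos_neg, neg_sub]
    _ ≤ ‖Complex.exp (c * Complex.I) * z‖ := Complex.re_le_norm _
    _ = ‖z‖ := by rw [norm_mul, Complex.norm_exp_ofReal_mul_I, one_mul]

theorem stmt14 (n : ℕ) (a : Fin n → ℂ) (ha : ∑ j, ‖a j‖ ^ 2 = 1)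
    (E : Fin n → ℝ) (τ : ℝ) (hτ : 0 ≤ τ) (p φ : ℝ) (hp : p ∈ Set.Ioo (0 : ℝ) 2)
    (hφ : φ ∈ Set.Ioo (0 : ℝ) Real.pi ∧
      p * (Real.cos φ - 1) + φ * Real.sin φ = 0)
    (hφle : φ ≤ Real.arccos
      ‖∑ j, ((‖a j‖ ^ 2 : ℝ) : ℂ) * Complex.exp (-Complex.I * (E j : ℂ) * (τ : ℂ))‖) :
    ∀ Er : ℝ,
      (Real.arccos
        ‖∑ j, ((‖a j‖ ^ 2 : ℝ) : ℂ) * Complex.exp (-Complex.I * (E j : ℂ) * (τ : ℂ))‖) ^ p ≤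
      τ ^ p * ∑ j, ‖a j‖ ^ 2 * |E j - Er| ^ p := by
  intro Er
  obtain ⟨⟨hφ0, -⟩, hφp⟩ := hφ
  set z := ∑ j, ((‖a j‖ ^ 2 : ℝ) : ℂ) * Complex.exp (-Complex.I * (E j : ℂ) * (τ : ℂ))
  set θ := arccos ‖z‖
  have hθ0 : 0 < θ := hφ0.trans_le hφle
  have hθπ : θ < π := arccos_lt_pi.mpr (by linarith [norm_nonneg z])
  -- `θ > 0` forces `‖z‖ < 1`, so `θ` really is the angle with cosine `‖z‖`
  have hcos : cos θ = ‖z‖ := cos_arccos (by linarith [norm_nonneg z]) (arccos_pos.mp hθ0).le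
  have hk := mul_sin_le_mul_one_sub_cos hφ0 hφp hφle (by linarith [pi_pos])
  have hz : z = ∑ j, ((‖a j‖ ^ 2 : ℝ) : ℂ) * Complex.exp (-Complex.I * ((E j * τ : ℝ) : ℂ)) :=
    Finset.sum_congr rfl fun j _ => by push_cast; ring_nf
  calc θ ^ p ≤ ∑ j, ‖a j‖ ^ 2 * |(E j - Er) * τ| ^ p :=
        rpow_le_sum_mul_abs_rpow _ (fun j _ => by positivity) ha hp.1 ⟨hθ0, hθπ⟩ hk <| by
          simpa only [hcos, hz, sub_mul] using
            sum_mul_cos_sub_le_norm Finset.univ (fun j => ‖a j‖ ^ 2) (fun j => E j * τ) (Er * τ)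
    _ = τ ^ p * ∑ j, ‖a j‖ ^ 2 * |E j - Er| ^ p := by
        simp only [Finset.mul_sum, abs_mul, abs_of_nonneg hτ, mul_rpow (abs_nonneg _) hτ]
        exact Finset.sum_congr rfl fun j _ => by ring
end

section
/- Let a₀, a₁ ∈ ℂ be nonzero with ‖a₀‖² + ‖a₁‖² = 1, let E₀ < E₁ be real, let τ ≥ 0, and set √ε = ‖‖a₀‖²·exp(−i·E₀·τ) + ‖a₁‖²·exp(−i·E₁·τ)‖. Then for every p ∈ (1,2]: τ^p ≥ (1 − √ε)·(‖a₀‖^{−2/(p−1)} + ‖a₁‖^{−2/(p−1)})^{p−1} / ((E₁ − E₀)^p·A_{p,0}). -/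
/-! With `cᵢ = ‖aᵢ‖²`, multiplying the evolved overlap by the phase `exp (i (E₀ τ + x))` shows
`√ε ≥ c₀ cos x + c₁ cos y` for every split `x + y = (E₁ - E₀) τ` into nonnegative parts.
Since `1 - cos t ≤ A_{p,0} t ^ p` for all `t ≥ 0` (for `t ≥ π` because
`A_{p,0} ≥ 2 / π ^ p`, the limit of the defining quotient at `π`), this gives
`1 - √ε ≤ A_{p,0} (c₀ x ^ p + c₁ y ^ p)`, and the split minimising the right-hand side yields
the bound. -/

open Real Set Filter Topology

section CosBound

variable {p : ℝ}

lemma bddAbove_Aset_zero (hp : p ≤ 2) : BddAbove (Aset p 0) := by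
  refine ⟨π ^ (2 - p) / 2, ?_⟩
  rintro _ ⟨x, ⟨hx0, hxπ⟩, rfl⟩
  have hcos : 1 - cos x ≤ x ^ (2 : ℝ) / 2 := by
    rw [rpow_two]; linarith [one_sub_sq_div_two_le_cos (x := x)]
  calc (cos 0 - cos x) / (x - 0) ^ p = (1 - cos x) / x ^ p := by simp
    _ ≤ (x ^ (2 : ℝ) / 2) / x ^ p := by gcongr
    _ = x ^ (2 - p) / 2 := by rw [rpow_sub hx0]; ring
    _ ≤ π ^ (2 - p) / 2 := by gcongr

lemma div_rpow_le_A_zero (hp : p ≤ 2) {x : ℝ} (hx : x ∈ Ioo 0 π) :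
    (1 - cos x) / x ^ p ≤ A p 0 :=
  le_csSup (bddAbove_Aset_zero hp) ⟨x, hx, by simp⟩

lemma two_div_pi_rpow_le_A_zero (hp : p ≤ 2) : 2 / π ^ p ≤ A p 0 := by
  have hcont : ContinuousAt (fun x => (1 - cos x) / x ^ p) π :=
    ((continuous_const.sub continuous_cos).continuousAt).div
      (continuousAt_rpow_const _ _ (Or.inl pi_ne_zero)) (rpow_pos_of_pos pi_pos p).ne'
  have hlim : Tendsto (fun x => (1 - cos x) / x ^ p) (𝓝[<] π) (𝓝 (2 / π ^ p)) := by
    convert hcont.tendsto.mono_left nhdsWithin_le_nhds using 2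
    rw [cos_pi]; norm_num
  exact le_of_tendsto hlim (eventually_of_mem (Ioo_mem_nhdsLT pi_pos)
    fun x hx => div_rpow_le_A_zero hp hx)

lemma A_zero_pos (hp : p ≤ 2) : 0 < A p 0 :=
  (div_pos two_pos (rpow_pos_of_pos pi_pos p)).trans_le (two_div_pi_rpow_le_A_zero hp)

lemma one_sub_cos_le_A_zero_mul_rpow (hp0 : 0 < p) (hp2 : p ≤ 2) {t : ℝ} (ht : 0 ≤ t) :
    1 - cos t ≤ A p 0 * t ^ p := by
  rcases ht.eq_or_lt with rfl | ht0
  · simp [zero_rpow hp0.ne']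
  rcases lt_or_ge t π with htπ | htπ
  · exact (div_le_iff₀ (rpow_pos_of_pos ht0 p)).mp (div_rpow_le_A_zero hp2 ⟨ht0, htπ⟩)
  · have hπp : 0 < π ^ p := rpow_pos_of_pos pi_pos p
    calc 1 - cos t ≤ 2 := by linarith [neg_one_le_cos t]
      _ = 2 / π ^ p * π ^ p := by field_simp
      _ ≤ A p 0 * t ^ p := by
        gcongr
        · exact (A_zero_pos hp2).le
        · exact two_div_pi_rpow_le_A_zero hp2

end CosBound

open Complex in
lemma mul_cos_add_mul_cos_le_norm {c₀ c₁ E₀ E₁ τ x y : ℝ} (hxy : x + y = (E₁ - E₀) * τ) :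
    c₀ * Real.cos x + c₁ * Real.cos y ≤
      ‖(c₀ : ℂ) * exp (-I * E₀ * τ) + (c₁ : ℂ) * exp (-I * E₁ * τ)‖ := by
  set z : ℂ := (c₀ : ℂ) * exp (-I * E₀ * τ) + (c₁ : ℂ) * exp (-I * E₁ * τ)
  have hrot : exp (↑(E₀ * τ + x) * I) * z = c₀ * exp (x * I) + c₁ * exp (↑(-y) * I) := by
    have hxyC : (x : ℂ) + y = (E₁ - E₀) * τ := by exact_mod_cast hxy
    rw [mul_add, mul_left_comm, ← Complex.exp_add, mul_left_comm, ← Complex.exp_add]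
    congr 3 <;> push_cast
    · ring
    · linear_combination I * hxyC
  calc c₀ * Real.cos x + c₁ * Real.cos y = (exp (↑(E₀ * τ + x) * I) * z).re := by
        rw [hrot]
        simp only [add_re, re_ofReal_mul, exp_ofReal_mul_I_re, Real.cos_neg]
    _ ≤ ‖exp (↑(E₀ * τ + x) * I) * z‖ := re_le_norm _
    _ = ‖z‖ := by rw [norm_mul, norm_exp_ofReal_mul_I, one_mul]

/-- The split `x : y = c₁ ^ q : c₀ ^ q` of `s = x + y` minimises `c₀ x ^ p + c₁ y ^ p`. -/
lemma mul_rpow_add_mul_rpow_of_split {p q c₀ c₁ s : ℝ} (hq : q * (p - 1) = 1)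
    (hc₀ : 0 < c₀) (hc₁ : 0 < c₁) (hs : 0 ≤ s) :
    c₀ * (s * c₁ ^ q / (c₀ ^ q + c₁ ^ q)) ^ p + c₁ * (s * c₀ ^ q / (c₀ ^ q + c₁ ^ q)) ^ p =
      s ^ p / (c₀ ^ (-q) + c₁ ^ (-q)) ^ (p - 1) := by
  have hpow : ∀ {c : ℝ}, 0 < c → (c ^ q) ^ p = c ^ q * c := fun hc => by
    rw [← rpow_mul hc.le, show q * p = q + 1 by linear_combination hq, rpow_add hc, rpow_one]
  have hd₀ : 0 < c₀ ^ q := rpow_pos_of_pos hc₀ q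
  have hd₁ : 0 < c₁ ^ q := rpow_pos_of_pos hc₁ q
  set T := c₀ ^ q + c₁ ^ q
  have hT : 0 < T := add_pos hd₀ hd₁
  have hTp : T ^ p = T ^ (p - 1) * T := by
    rw [← rpow_add_one hT.ne']; ring_nf
  have hB : (c₀ ^ (-q) + c₁ ^ (-q)) ^ (p - 1) = T ^ (p - 1) / (c₀ * c₁) := by
    rw [rpow_neg hc₀.le, rpow_neg hc₁.le, inv_add_inv hd₀.ne' hd₁.ne',
      div_rpow hT.le (mul_pos hd₀ hd₁).le, ← mul_rpow hc₀.le hc₁.le,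
      ← rpow_mul (mul_pos hc₀ hc₁).le, hq, rpow_one]
  rw [div_rpow (by positivity) hT.le, div_rpow (by positivity) hT.le, mul_rpow hs hd₀.le,
    mul_rpow hs hd₁.le, hpow hc₀, hpow hc₁, hB, hTp]
  field_simp
  ring

theorem stmt19 (a0 a1 : ℂ) (h0 : a0 ≠ 0) (h1 : a1 ≠ 0)
    (hnorm : ‖a0‖ ^ 2 + ‖a1‖ ^ 2 = 1)
    (E0 E1 : ℝ) (hE : E0 < E1) (τ : ℝ) (hτ : 0 ≤ τ)
    (p : ℝ) (hp : p ∈ Set.Ioc (1 : ℝ) 2) :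
    (1 - ‖((‖a0‖ ^ 2 : ℝ) : ℂ) * Complex.exp (-Complex.I * (E0 : ℂ) * (τ : ℂ)) +
          ((‖a1‖ ^ 2 : ℝ) : ℂ) * Complex.exp (-Complex.I * (E1 : ℂ) * (τ : ℂ))‖) *
        (‖a0‖ ^ (-(2 / (p - 1))) + ‖a1‖ ^ (-(2 / (p - 1)))) ^ (p - 1) /
        ((E1 - E0) ^ p * A p 0) ≤ τ ^ p := by
  obtain ⟨hp1, hp2⟩ := hp
  set q := (p - 1)⁻¹
  have hq : q * (p - 1) = 1 := inv_mul_cancel₀ (sub_pos.mpr hp1).ne'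
  have hweight : ∀ a : ℂ, ‖a‖ ^ (-(2 / (p - 1))) = (‖a‖ ^ 2) ^ (-q) := fun a => by
    rw [← rpow_natCast, ← rpow_mul (norm_nonneg a)]; congr 1; simp only [q]; push_cast; ring
  rw [hweight, hweight]
  set c₀ := ‖a0‖ ^ 2
  set c₁ := ‖a1‖ ^ 2
  have hc₀ : 0 < c₀ := pow_pos (norm_pos_iff.mpr h0) 2
  have hc₁ : 0 < c₁ := pow_pos (norm_pos_iff.mpr h1) 2
  have hs : 0 ≤ (E1 - E0) * τ := mul_nonneg (sub_pos.mpr hE).le hτ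
  set x := (E1 - E0) * τ * c₁ ^ q / (c₀ ^ q + c₁ ^ q)
  set y := (E1 - E0) * τ * c₀ ^ q / (c₀ ^ q + c₁ ^ q)
  have hxy : x + y = (E1 - E0) * τ := by simp only [x, y]; field_simp; ring
  have hgap : 1 - ‖(c₀ : ℂ) * Complex.exp (-Complex.I * E0 * τ) +
      (c₁ : ℂ) * Complex.exp (-Complex.I * E1 * τ)‖ ≤ A p 0 * (c₀ * x ^ p + c₁ * y ^ p) := by
    have hx := one_sub_cos_le_A_zero_mul_rpow (by linarith) hp2 (t := x) (by positivity)
    have hy := one_sub_cos_le_A_zero_mul_rpow (by linarith) hp2 (t := y) (by positivity)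
    linarith [mul_le_mul_of_nonneg_left hx hc₀.le, mul_le_mul_of_nonneg_left hy hc₁.le,
      mul_cos_add_mul_cos_le_norm (c₀ := c₀) (c₁ := c₁) hxy]
  rw [mul_rpow_add_mul_rpow_of_split hq hc₀ hc₁ hs, mul_rpow (sub_pos.mpr hE).le hτ] at hgap
  have hB : 0 < (c₀ ^ (-q) + c₁ ^ (-q)) ^ (p - 1) := by positivity
  have hA : 0 < A p 0 := A_zero_pos hp2
  rw [div_le_iff₀ (mul_pos (rpow_pos_of_pos (sub_pos.mpr hE) p) hA)]
  calc _ ≤ A p 0 * ((E1 - E0) ^ p * τ ^ p / (c₀ ^ (-q) + c₁ ^ (-q)) ^ (p - 1)) *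
        (c₀ ^ (-q) + c₁ ^ (-q)) ^ (p - 1) := by gcongr
    _ = τ ^ p * ((E1 - E0) ^ p * A p 0) := by field_simp
end
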